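/- Let f : ℝ → ℝ be smooth with f' nowhere flat, and let c ∈ ℝ be a local extremum of f' (i.e., there is δ > 0 with f'(x) ≤ f'(c) for all |x−c| < δ, or f'(x) ≥ f'(c) for all |x−c| < δ). Then there exists ε > 0 such that the only continuous 2π-periodic u : ℝ → ℝ with sup_t |u(t) − c| < ε, Φ_{f'∘u}(2π) = Φ_{p}(2π) and θ_{f'∘u}(2π) = θ_{p}(2π), where p is the constant function with value f'(c), is the constant function u ≡ c. (The constant c is an isolated point of its monodromy level set.) -/

import Mathlib

/-!
Write `q = f' ∘ u` and `p ≡ f'(c)`. If `u` is uniformly close to `c`, then `q` is uniformly close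
to `p`, so by Grönwall the first row of `Φ_q` stays close to that of `Φ_p` and their inner product
`w` stays positive on `[0, 2π]`; since `c` is a local extremum of `f'`, `q - p` has constant sign.
The pairing `W = ⟨Φ_q row 1, Φ_p row 0⟩ - ⟨Φ_q row 0, Φ_p row 1⟩` satisfies `W' = (q - p) w`,
vanishes at `0`, and vanishes at `2π` when `Φ_q(2π) = Φ_p(2π)`. A sign-definite continuous
integrand with zero integral vanishes, so `q ≡ p`. Finally, by repeated Rolle, a nowhere flat `f'`
takes the value `f'(c)` at no point near `c` other than `c` itself, whence `u ≡ c`.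
-/

open Real Set Matrix

/-- A smooth function is nowhere flat if some derivative of order `r' ≤ r` (for a
uniform `r`) is nonzero at every point. -/
def NowhereFlat (g : ℝ → ℝ) : Prop :=
  ∃ r : ℕ, 0 < r ∧ ∀ x : ℝ, ∃ r' : ℕ, 0 < r' ∧ r' ≤ r ∧ iteratedDeriv r' g x ≠ 0

/-- `Φ` is the fundamental matrix of the potential `q`: `Φ(0) = I` and
`Φ' = [[0,1],[q,0]]·Φ`. -/
def IsFundMatrix (q : ℝ → ℝ) (Φ : ℝ → Matrix (Fin 2) (Fin 2) ℝ) : Prop :=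
  Φ 0 = 1 ∧
    ∀ t : ℝ, ∀ i j, HasDerivAt (fun s => Φ s i j) ((!![0, 1; q t, 0] * Φ t) i j) t

/-- `θ` is the continuous argument lift on `[0,2π]` of the first row of `Φ`. -/
def IsArgLift (Φ : ℝ → Matrix (Fin 2) (Fin 2) ℝ) (θ : ℝ → ℝ) : Prop :=
  ContinuousOn θ (Icc 0 (2 * π)) ∧ θ 0 = 0 ∧
    ∀ t ∈ Icc (0:ℝ) (2 * π),
      Φ t 0 0 = Real.sqrt ((Φ t 0 0) ^ 2 + (Φ t 0 1) ^ 2) * Real.cos (θ t) ∧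
      Φ t 0 1 = Real.sqrt ((Φ t 0 0) ^ 2 + (Φ t 0 1) ^ 2) * Real.sin (θ t)

open Filter Topology

theorem frequently_deriv_eq_zero_of_frequently_eq {F : ℝ → ℝ} {c : ℝ}
    (hF : Differentiable ℝ F) (h : ∃ᶠ x in 𝓝[≠] c, F x = F c) : ∃ᶠ y in 𝓝[≠] c, deriv F y = 0 := by
  rw [frequently_nhdsWithin_iff, Metric.nhds_basis_ball.frequently_iff] at h ⊢
  intro ε hε
  obtain ⟨x, hxc, hFx, hx⟩ := h ε hε
  rw [Metric.mem_ball, Real.dist_eq, abs_sub_lt_iff] at hxc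
  rcases lt_or_gt_of_ne hx with hlt | hgt
  · obtain ⟨y, hy, hy'⟩ := exists_deriv_eq_zero hlt hF.continuous.continuousOn hFx
    refine ⟨y, ?_, hy', hy.2.ne⟩
    rw [Metric.mem_ball, Real.dist_eq, abs_sub_lt_iff]
    constructor <;> linarith [hy.1, hy.2]
  · obtain ⟨y, hy, hy'⟩ := exists_deriv_eq_zero hgt hF.continuous.continuousOn hFx.symm
    refine ⟨y, ?_, hy', hy.1.ne'⟩
    rw [Metric.mem_ball, Real.dist_eq, abs_sub_lt_iff]
    constructor <;> linarith [hy.1, hy.2]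

theorem eventually_ne_of_iteratedDeriv_ne_zero {g : ℝ → ℝ} {n : ℕ} (hg : ContDiff ℝ n g)
    {c : ℝ} (hn : 0 < n) (hc : iteratedDeriv n g c ≠ 0) : ∀ᶠ x in 𝓝[≠] c, g x ≠ g c := by
  by_contra! hfreq
  have hzero : ∀ k, 0 < k → k ≤ n → ∃ᶠ x in 𝓝[≠] c, iteratedDeriv k g x = 0 := by
    intro k hk hkn
    induction k, hk using Nat.le_induction with
    | base =>
      simpa using frequently_deriv_eq_zero_of_frequently_eq
        (hg.differentiable (by exact_mod_cast hn.ne')) hfreq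
    | succ k hk ih =>
      have hkc : iteratedDeriv k g c = 0 :=
        isClosed_singleton.mem_of_frequently_of_tendsto (ih (by omega))
          ((hg.continuous_iteratedDeriv k (by exact_mod_cast (by omega : k ≤ n))).tendsto c
            |>.mono_left nhdsWithin_le_nhds)
      rw [iteratedDeriv_succ]
      refine frequently_deriv_eq_zero_of_frequently_eq
        (hg.differentiable_iteratedDeriv k (by exact_mod_cast (by omega : k < n))) ?_
      simpa [hkc] using ih (by omega)
  exact hc <| isClosed_singleton.mem_of_frequently_of_tendsto (hzero n hn le_rfl)
    ((hg.continuous_iteratedDeriv n le_rfl).tendsto c |>.mono_left nhdsWithin_le_nhds)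

theorem eqOn_of_integral_sub_mul_eq_zero {p q w : ℝ → ℝ} {a b : ℝ} (hab : a < b)
    (hq : ContinuousOn q (Icc a b)) (hp : ContinuousOn p (Icc a b))
    (hw : ContinuousOn w (Icc a b)) (hw0 : ∀ t ∈ Icc a b, 0 < w t)
    (hsign : (∀ t ∈ Icc a b, q t ≤ p t) ∨ (∀ t ∈ Icc a b, p t ≤ q t))
    (h : ∫ t in a..b, (q t - p t) * w t = 0) : EqOn q p (Icc a b) := by
  wlog hle : ∀ t ∈ Icc a b, p t ≤ q t generalizing p q
  · refine fun t ht => (this hp hq hsign.symm ?_ (hsign.resolve_right hle) ht).symm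
    simp only [← neg_sub (q _), neg_mul, intervalIntegral.integral_neg, h, neg_zero]
  intro t ht
  by_contra hne
  have hpos := intervalIntegral.integral_pos hab ((hq.sub hp).mul hw)
    (fun x hx => mul_nonneg (sub_nonneg.2 (hle x (Ioc_subset_Icc_self hx)))
      (hw0 x (Ioc_subset_Icc_self hx)).le)
    ⟨t, ht, mul_pos (sub_pos.2 ((hle t ht).lt_of_ne' hne)) (hw0 t ht)⟩
  exact hpos.ne' h

theorem abs_apply_apply_le_pi_norm {m n : Type*} [Fintype m] [Fintype n] (A : m → n → ℝ)
    (i : m) (j : n) : |A i j| ≤ ‖A‖ :=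
  (norm_le_pi_norm (A i) j).trans (norm_le_pi_norm A i)

theorem companion_mul_apply_zero (a : ℝ) (M : Matrix (Fin 2) (Fin 2) ℝ) (j : Fin 2) :
    (!![0, 1; a, 0] * M) 0 j = M 1 j := by
  simp [Matrix.mul_apply, Fin.sum_univ_two]

theorem companion_mul_apply_one (a : ℝ) (M : Matrix (Fin 2) (Fin 2) ℝ) (j : Fin 2) :
    (!![0, 1; a, 0] * M) 1 j = a * M 0 j := by
  simp [Matrix.mul_apply, Fin.sum_univ_two]

namespace IsFundMatrix

variable {q p : ℝ → ℝ} {Φ Ψ : ℝ → Matrix (Fin 2) (Fin 2) ℝ}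

theorem hasDerivAt_row_zero (h : IsFundMatrix q Φ) (t : ℝ) (j : Fin 2) :
    HasDerivAt (fun s => Φ s 0 j) (Φ t 1 j) t := by
  simpa only [companion_mul_apply_zero] using h.2 t 0 j

theorem hasDerivAt_row_one (h : IsFundMatrix q Φ) (t : ℝ) (j : Fin 2) :
    HasDerivAt (fun s => Φ s 1 j) (q t * Φ t 0 j) t := by
  simpa only [companion_mul_apply_one] using h.2 t 1 j

theorem continuous_apply (h : IsFundMatrix q Φ) (i j : Fin 2) : Continuous fun s => Φ s i j :=
  continuous_iff_continuousAt.mpr fun t => (h.2 t i j).continuousAt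

theorem continuous (h : IsFundMatrix q Φ) : Continuous fun s (i j : Fin 2) => Φ s i j :=
  continuous_pi fun i => continuous_pi fun j => h.continuous_apply i j

theorem continuous_dotProduct (hq : IsFundMatrix q Φ) (hp : IsFundMatrix p Ψ) (i j : Fin 2) :
    Continuous fun t => Φ t i ⬝ᵥ Ψ t j := by
  simp only [dotProduct, Fin.sum_univ_two]
  have := hq.continuous_apply
  have := hp.continuous_apply
  fun_prop

theorem det_eq_one (h : IsFundMatrix q Φ) (t : ℝ) : (Φ t).det = 1 := by
  have hder : ∀ s, HasDerivAt (fun s => (Φ s).det) 0 s := by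
    intro s
    simp only [Matrix.det_fin_two]
    refine (((h.hasDerivAt_row_zero s 0).fun_mul (h.hasDerivAt_row_one s 1)).fun_sub
      ((h.hasDerivAt_row_zero s 1).fun_mul (h.hasDerivAt_row_one s 0))).congr_deriv ?_
    ring
  rw [is_const_of_deriv_eq_zero (fun s => (hder s).differentiableAt) (fun s => (hder s).deriv)
    t 0, h.1, Matrix.det_one]

theorem dotProduct_row_zero_pos (h : IsFundMatrix q Φ) (t : ℝ) : 0 < Φ t 0 ⬝ᵥ Φ t 0 := by
  have hdet := h.det_eq_one t
  rw [Matrix.det_fin_two] at hdet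
  simp only [dotProduct, Fin.sum_univ_two]
  by_contra! hle
  have h0 : Φ t 0 0 = 0 := by nlinarith
  have h1 : Φ t 0 1 = 0 := by nlinarith
  simp [h0, h1] at hdet

theorem hasDerivAt_wronskian (hq : IsFundMatrix q Φ) (hp : IsFundMatrix p Ψ) (t : ℝ) :
    HasDerivAt (fun s => Φ s 1 ⬝ᵥ Ψ s 0 - Φ s 0 ⬝ᵥ Ψ s 1)
      ((q t - p t) * (Φ t 0 ⬝ᵥ Ψ t 0)) t := by
  simp only [dotProduct, Fin.sum_univ_two]
  refine ((((hq.hasDerivAt_row_one t 0).fun_mul (hp.hasDerivAt_row_zero t 0)).fun_add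
      ((hq.hasDerivAt_row_one t 1).fun_mul (hp.hasDerivAt_row_zero t 1))).fun_sub
    (((hq.hasDerivAt_row_zero t 0).fun_mul (hp.hasDerivAt_row_one t 0)).fun_add
      ((hq.hasDerivAt_row_zero t 1).fun_mul (hp.hasDerivAt_row_one t 1)))).congr_deriv ?_
  ring

theorem integral_sub_mul_dotProduct_eq_zero (hq : IsFundMatrix q Φ) (hp : IsFundMatrix p Ψ)
    (hqc : Continuous q) (hpc : Continuous p) {T : ℝ} (hT : Φ T = Ψ T) :
    ∫ t in (0:ℝ)..T, (q t - p t) * (Φ t 0 ⬝ᵥ Ψ t 0) = 0 := by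
  rw [intervalIntegral.integral_eq_sub_of_hasDerivAt (fun t _ => hasDerivAt_wronskian hq hp t)
    (((hqc.sub hpc).mul (hq.continuous_dotProduct hp 0 0)).intervalIntegrable _ _), hT, hq.1,
    hp.1, dotProduct_comm (Ψ T 1)]
  simp

theorem abs_sub_le_gronwallBound (hq : IsFundMatrix q Φ) (hp : IsFundMatrix p Ψ)
    {T K B ε : ℝ} (hK : 1 ≤ K) (hqK : ∀ t ∈ Ico 0 T, |q t| ≤ K)
    (hΨB : ∀ t ∈ Ico 0 T, ∀ j, |Ψ t 0 j| ≤ B) (hε : ∀ t ∈ Ico 0 T, |q t - p t| ≤ ε) :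
    ∀ t ∈ Icc 0 T, ∀ i j, |Φ t i j - Ψ t i j| ≤ gronwallBound 0 K (ε * B) t := by
  set V : ℝ → Fin 2 → Fin 2 → ℝ := fun t i j => Φ t i j - Ψ t i j
  have hV (t : ℝ) (i j : Fin 2) : |V t i j| ≤ ‖V t‖ := abs_apply_apply_le_pi_norm (V t) i j
  have hder (t : ℝ) : HasDerivAt V
      (fun i j => (!![0, 1; q t, 0] * Φ t) i j - (!![0, 1; p t, 0] * Ψ t) i j) t :=
    hasDerivAt_pi.2 fun i => hasDerivAt_pi.2 fun j => (hq.2 t i j).sub (hp.2 t i j)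
  have hbound : ∀ t ∈ Ico 0 T,
      ‖fun i j => (!![0, 1; q t, 0] * Φ t) i j - (!![0, 1; p t, 0] * Ψ t) i j‖ ≤
        K * ‖V t‖ + ε * B := by
    intro t ht
    have hε0 : 0 ≤ ε := (abs_nonneg _).trans (hε t ht)
    have hB0 : 0 ≤ B := (abs_nonneg _).trans (hΨB t ht 0)
    have hK0 : 0 ≤ K := zero_le_one.trans hK
    refine pi_norm_le_iff_of_nonneg (by positivity) |>.2 fun i =>
      pi_norm_le_iff_of_nonneg (by positivity) |>.2 fun j => ?_
    fin_cases i
    · simp only [Fin.zero_eta, companion_mul_apply_zero, Real.norm_eq_abs]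
      nlinarith [hV t 1 j, norm_nonneg (V t), mul_nonneg hε0 hB0]
    · simp only [Fin.mk_one, companion_mul_apply_one, Real.norm_eq_abs]
      calc |q t * Φ t 0 j - p t * Ψ t 0 j|
          = |q t * V t 0 j + (q t - p t) * Ψ t 0 j| := by simp only [V]; congr 1; ring
        _ ≤ |q t| * |V t 0 j| + |q t - p t| * |Ψ t 0 j| := by
          rw [← abs_mul, ← abs_mul]; exact abs_add_le _ _
        _ ≤ K * ‖V t‖ + ε * B := by
          gcongr
          exacts [hqK t ht, hV t 0 j, hε t ht, hΨB t ht j]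
  have hV0 : ‖V 0‖ ≤ 0 := by simp [V, hq.1, hp.1]
  intro t ht i j
  have := norm_le_gronwallBound_of_norm_deriv_right_le
    (hq.continuous.sub hp.continuous).continuousOn (fun t _ => (hder t).hasDerivWithinAt) hV0
    hbound t ht
  rw [sub_zero] at this
  exact (hV t i j).trans this

theorem exists_forall_dotProduct_pos (hp : IsFundMatrix p Ψ) (hpc : Continuous p) {T : ℝ}
    (hT : 0 ≤ T) :
    ∃ ε > 0, ∀ (q : ℝ → ℝ) (Φ : ℝ → Matrix (Fin 2) (Fin 2) ℝ), IsFundMatrix q Φ →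
      (∀ t ∈ Icc 0 T, |q t - p t| ≤ ε) → ∀ t ∈ Icc 0 T, 0 < Φ t 0 ⬝ᵥ Ψ t 0 := by
  have h0T : (0 : ℝ) ∈ Icc 0 T := ⟨le_rfl, hT⟩
  obtain ⟨B, hB⟩ := isCompact_Icc.exists_bound_of_continuousOn hp.continuous.continuousOn
  have hΨB : ∀ t ∈ Icc 0 T, ∀ i j, |Ψ t i j| ≤ B := fun t ht i j =>
    (abs_apply_apply_le_pi_norm (fun i j => Ψ t i j) i j).trans (hB t ht)
  have hB0 : 0 ≤ B := (abs_nonneg _).trans (hΨB 0 h0T 0 0)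
  obtain ⟨P, hP⟩ := isCompact_Icc.exists_bound_of_continuousOn hpc.continuousOn
  have hP0 : 0 ≤ P := (norm_nonneg _).trans (hP 0 h0T)
  obtain ⟨t₀, -, hmin⟩ := isCompact_Icc.exists_isMinOn ⟨0, h0T⟩
    (hp.continuous_dotProduct hp 0 0).continuousOn
  set m := Ψ t₀ 0 ⬝ᵥ Ψ t₀ 0
  have hm : 0 < m := hp.dotProduct_row_zero_pos t₀
  have hsmall : ∀ᶠ ε in 𝓝[>] 0, 2 * B * gronwallBound 0 (P + 1) (ε * B) T < m ∧ ε ≤ 1 := by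
    have hcont : Continuous fun ε => 2 * B * gronwallBound 0 (P + 1) (ε * B) T :=
      continuous_const.mul ((gronwallBound_continuous_ε 0 (P + 1) T).comp
        (continuous_id.mul continuous_const))
    refine nhdsWithin_le_nhds ((hcont.tendsto 0).eventually (gt_mem_nhds ?_) |>.and
      (eventually_le_nhds one_pos))
    simpa [gronwallBound_ε0_δ0] using hm
  obtain ⟨ε, ⟨hεm, hε1⟩, hε0⟩ := (hsmall.and self_mem_nhdsWithin).exists
  refine ⟨ε, hε0, fun q Φ hq hqp t ht => ?_⟩
  have hgron := hq.abs_sub_le_gronwallBound hp (K := P + 1) (by linarith)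
    (fun s hs => by
      have hs' := Ico_subset_Icc_self hs
      linarith [abs_sub_abs_le_abs_sub (q s) (p s), hqp s hs', Real.norm_eq_abs (p s) ▸ hP s hs'])
    (fun s hs => hΨB s (Ico_subset_Icc_self hs) 0) (fun s hs => hqp s (Ico_subset_Icc_self hs))
  set η := gronwallBound 0 (P + 1) (ε * B) T
  have hη (j : Fin 2) : |Φ t 0 j - Ψ t 0 j| ≤ η :=
    (hgron t ht 0 j).trans (gronwallBound_mono le_rfl (by positivity) (by positivity) ht.2)
  have hj (j : Fin 2) : -(η * B) ≤ (Φ t 0 j - Ψ t 0 j) * Ψ t 0 j := by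
    refine neg_le_of_abs_le ?_
    rw [abs_mul]
    exact mul_le_mul (hη j) (hΨB t ht 0 j) (abs_nonneg _) ((abs_nonneg _).trans (hη 0))
  have hmt : m ≤ Ψ t 0 ⬝ᵥ Ψ t 0 := hmin ht
  calc 0 < m - 2 * (η * B) := by linarith
    _ ≤ Ψ t 0 ⬝ᵥ Ψ t 0 + ((Φ t 0 0 - Ψ t 0 0) * Ψ t 0 0 + (Φ t 0 1 - Ψ t 0 1) * Ψ t 0 1) := by
      linarith [hj 0, hj 1]
    _ = Φ t 0 ⬝ᵥ Ψ t 0 := by simp only [dotProduct, Fin.sum_univ_two]; ring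

theorem exists_eqOn_of_apply_eq (hp : IsFundMatrix p Ψ) (hpc : Continuous p) {T : ℝ}
    (hT : 0 < T) :
    ∃ ε > 0, ∀ (q : ℝ → ℝ) (Φ : ℝ → Matrix (Fin 2) (Fin 2) ℝ), Continuous q → IsFundMatrix q Φ →
      (∀ t ∈ Icc 0 T, |q t - p t| ≤ ε) →
      ((∀ t ∈ Icc 0 T, q t ≤ p t) ∨ (∀ t ∈ Icc 0 T, p t ≤ q t)) →
      Φ T = Ψ T → EqOn q p (Icc 0 T) := by
  obtain ⟨ε, hε, hpos⟩ := hp.exists_forall_dotProduct_pos hpc hT.le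
  refine ⟨ε, hε, fun q Φ hqc hq hqp hsign hΦT => ?_⟩
  exact eqOn_of_integral_sub_mul_eq_zero hT hqc.continuousOn hpc.continuousOn
    (hq.continuous_dotProduct hp 0 0).continuousOn (hpos q Φ hq hqp) hsign
    (hq.integral_sub_mul_dotProduct_eq_zero hp hqc hpc hΦT)

end IsFundMatrix

theorem stmt_8_general (f : ℝ → ℝ) (hf : ContDiff ℝ (⊤ : ℕ∞) f) (hnf : NowhereFlat (deriv f))
    (c : ℝ)
    (hext : (∃ δ > 0, ∀ x : ℝ, |x - c| < δ → deriv f x ≤ deriv f c) ∨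
            (∃ δ > 0, ∀ x : ℝ, |x - c| < δ → deriv f c ≤ deriv f x))
    -- `Φp`, `θp`: fundamental matrix and argument lift for the constant
    -- potential `p ≡ f'(c)`:
    (Φp : ℝ → Matrix (Fin 2) (Fin 2) ℝ) (θp : ℝ → ℝ)
    (hΦp : IsFundMatrix (fun _ => deriv f c) Φp) :
    ∃ ε > 0, ∀ u : ℝ → ℝ, Continuous u → Function.Periodic u (2 * π) →
      (∀ t : ℝ, |u t - c| < ε) →
      ∀ Φu : ℝ → Matrix (Fin 2) (Fin 2) ℝ, ∀ θu : ℝ → ℝ,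
        IsFundMatrix (fun t => deriv f (u t)) Φu → IsArgLift Φu θu →
        Φu (2 * π) = Φp (2 * π) → θu (2 * π) = θp (2 * π) →
        u = fun _ => c := by
  have hg : ContDiff ℝ (⊤ : ℕ∞) (deriv f) := (contDiff_infty_iff_deriv.mp hf).2
  have hgc : Continuous (deriv f) := hg.continuous
  obtain ⟨ε, hε, hrigid⟩ := hΦp.exists_eqOn_of_apply_eq continuous_const two_pi_pos
  have hiso : ∀ᶠ x in 𝓝 c, deriv f x = deriv f c → x = c := by
    obtain ⟨_, -, hr⟩ := hnf
    obtain ⟨r', hr', -, hne⟩ := hr c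
    have := eventually_ne_of_iteratedDeriv_ne_zero (hg.of_le (by exact_mod_cast le_top)) hr' hne
    exact (eventually_nhdsWithin_iff.1 this).mono fun x hx hxc => by_contra fun h => hx h hxc
  have hclose : ∀ᶠ x in 𝓝 c, |deriv f x - deriv f c| ≤ ε :=
    (hgc.tendsto c).eventually (Metric.closedBall_mem_nhds _ hε)
  obtain ⟨δ, hδ, hnear⟩ := Metric.eventually_nhds_iff.1 (hiso.and hclose)
  obtain ⟨δ', hδ', hsign⟩ : ∃ δ' > 0, (∀ x, |x - c| < δ' → deriv f x ≤ deriv f c) ∨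
      (∀ x, |x - c| < δ' → deriv f c ≤ deriv f x) :=
    hext.elim (fun ⟨δ, hδ, h⟩ => ⟨δ, hδ, .inl h⟩) fun ⟨δ, hδ, h⟩ => ⟨δ, hδ, .inr h⟩
  refine ⟨min δ δ', lt_min hδ hδ', fun u hu hper huc Φu θu hΦu _ hΦ _ => ?_⟩
  have hδu (t : ℝ) : dist (u t) c < δ := (huc t).trans_le (min_le_left _ _)
  have hδ'u (t : ℝ) : |u t - c| < δ' := (huc t).trans_le (min_le_right _ _)
  have hq : EqOn (fun t => deriv f (u t)) (fun _ => deriv f c) (Icc 0 (2 * π)) :=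
    hrigid _ Φu (hgc.comp hu) hΦu (fun t _ => (hnear (hδu t)).2)
      (hsign.imp (fun h t _ => h _ (hδ'u t)) fun h t _ => h _ (hδ'u t)) hΦ
  funext t
  obtain ⟨s, hs, hst⟩ := hper.exists_mem_Ico₀ two_pi_pos t
  rw [hst]
  exact (hnear (hδu s)).1 (hq (Ico_subset_Icc_self hs))

/-- Proposition 3.1(b), second case. If `c` is a local extremum of the
nowhere flat derivative `f'`, then the constant function `c` is an isolated point of its
level set of the lifted monodromy (the pair `(Φ(2π), θ(2π))`). -/
theorem stmt_8 (f : ℝ → ℝ) (hf : ContDiff ℝ (⊤ : ℕ∞) f) (hnf : NowhereFlat (deriv f))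
    (c : ℝ)
    (hext : (∃ δ > 0, ∀ x : ℝ, |x - c| < δ → deriv f x ≤ deriv f c) ∨
            (∃ δ > 0, ∀ x : ℝ, |x - c| < δ → deriv f c ≤ deriv f x))
    -- `Φp`, `θp`: fundamental matrix and argument lift for the constant
    -- potential `p ≡ f'(c)`:
    (Φp : ℝ → Matrix (Fin 2) (Fin 2) ℝ) (θp : ℝ → ℝ)
    (hΦp : IsFundMatrix (fun _ => deriv f c) Φp) (hθp : IsArgLift Φp θp) :
    ∃ ε > 0, ∀ u : ℝ → ℝ, Continuous u → Function.Periodic u (2 * π) →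
      (∀ t : ℝ, |u t - c| < ε) →
      ∀ Φu : ℝ → Matrix (Fin 2) (Fin 2) ℝ, ∀ θu : ℝ → ℝ,
        IsFundMatrix (fun t => deriv f (u t)) Φu → IsArgLift Φu θu →
        Φu (2 * π) = Φp (2 * π) → θu (2 * π) = θp (2 * π) →
        u = fun _ => c :=
  stmt_8_general f hf hnf c hext Φp θp hΦp
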